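/- arXiv:1705.03707 — 2 statements merged into one kernel-verified Lean document; each statement's English description precedes it below -/
import Mathlib

section
/- For all integers k ≥ 3 and 1 ≤ ℓ < k/2 and all n divisible by k−ℓ, the k-uniform hypergraph X_{k,ℓ}(n) contains no Hamiltonian ℓ-cycle. -/
open Finset

/-- `E` is the edge set of a `k`-uniform hypergraph on vertex set `Fin n`:
every edge is a `k`-element set of vertices. -/
def Uniform (n k : ℕ) (E : Finset (Finset (Fin n))) : Prop :=
  ∀ e ∈ E, e.card = k

/-- The degree `d(S)` of a vertex set `S`: the number of edges containing `S`. -/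
def deg {n : ℕ} (E : Finset (Finset (Fin n))) (S : Finset (Fin n)) : ℕ :=
  (E.filter fun e => S ⊆ e).card

/-- The minimum `s`-degree `δ_s(H)`: the minimum of `d(S)` over all `s`-element
vertex sets `S`. -/
noncomputable def minDeg (n : ℕ) (E : Finset (Finset (Fin n))) (s : ℕ) : ℕ :=
  sInf {d | ∃ S : Finset (Fin n), S.card = s ∧ deg E S = d}

/-- `d(L, X^(i) Y^(j))`: the number of edges of the form `L ∪ I ∪ J` with
`I ∈ X^(i)`, `J ∈ Y^(j)` (take `Y = ∅`, `j = 0` when `Y^(j)` is omitted). -/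
def degIn {n : ℕ} (E : Finset (Finset (Fin n))) (L X Y : Finset (Fin n)) (i j : ℕ) : ℕ :=
  (E.filter fun e =>
    L ⊆ e ∧ e \ L ⊆ X ∪ Y ∧ ((e \ L) ∩ X).card = i ∧ ((e \ L) ∩ Y).card = j).card

/-- The `i`-th edge of an ℓ-cycle given by the cyclic ordering `f` of the `n`
vertices: `k` cyclically consecutive vertices starting at position `i * (k - ℓ)`. -/
def cycEdge (n k ℓ : ℕ) (f : ℕ → Fin n) (i : ℕ) : Finset (Fin n) :=
  (Finset.range k).image fun j => f ((i * (k - ℓ) + j) % n)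

/-- `H = (Fin n, E)` contains a Hamiltonian ℓ-cycle: there is a cyclic ordering of
all `n` vertices such that each of the `n / (k - ℓ)` windows of `k` consecutive
vertices (consecutive windows overlapping in `ℓ` vertices) is an edge, and two
consecutive edges share exactly `ℓ` vertices. -/
def HasHamCycle (n k ℓ : ℕ) (E : Finset (Finset (Fin n))) : Prop :=
  ∃ f : ℕ → Fin n, Set.InjOn f (Set.Iio n) ∧
    (∀ i < n / (k - ℓ), cycEdge n k ℓ f i ∈ E) ∧
    (∀ i < n / (k - ℓ),
      (cycEdge n k ℓ f i ∩ cycEdge n k ℓ f ((i + 1) % (n / (k - ℓ)))).card = ℓ)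

/-- The `i`-th edge of an ℓ-path given by the linear ordering `f`. -/
def pathEdge (n k ℓ : ℕ) (f : ℕ → Fin n) (i : ℕ) : Finset (Fin n) :=
  (Finset.range k).image fun j => f (i * (k - ℓ) + j)

/-- `f` is (the linear ordering of the vertices of) an ℓ-path with `t` edges all of
which belong to `E`: the path has `t * (k - ℓ) + ℓ` vertices, every edge consists of
`k` consecutive vertices and two consecutive edges intersect in exactly `ℓ` vertices. -/
def IsPath (n k ℓ t : ℕ) (E : Finset (Finset (Fin n))) (f : ℕ → Fin n) : Prop :=
  Set.InjOn f (Set.Iio (t * (k - ℓ) + ℓ)) ∧ ∀ i < t, pathEdge n k ℓ f i ∈ E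

/-- The vertex set of the ℓ-path described by `f` with `t` edges. -/
def pathVerts (n k ℓ t : ℕ) (f : ℕ → Fin n) : Finset (Fin n) :=
  (Finset.range (t * (k - ℓ) + ℓ)).image f

/-- The first end (first `ℓ` vertices) of the ℓ-path described by `f`. -/
def pathEnd0 (n ℓ : ℕ) (f : ℕ → Fin n) : Finset (Fin n) :=
  (Finset.range ℓ).image f

/-- The last end (last `ℓ` vertices) of the ℓ-path described by `f` with `t` edges. -/
def pathEnd1 (n k ℓ t : ℕ) (f : ℕ → Fin n) : Finset (Fin n) :=
  (Finset.Ico (t * (k - ℓ)) (t * (k - ℓ) + ℓ)).image f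

/-- The extremal hypergraph `X_{k,ℓ}(n)` on `Fin n`.  If `n` is an odd multiple of
`k - ℓ`, take `A` to be the first `⌊n / (2(k-ℓ))⌋` vertices and all `k`-sets meeting
`A` as edges.  If `n` is an even multiple of `k - ℓ`, take `A` to be the first
`n / (2(k-ℓ)) - 1` vertices, fix the `ℓ + 1` following vertices (which lie in
`B = V ∖ A`), and take as edges all `k`-sets meeting `A` together with all `k`-subsets
of `B` containing all `ℓ + 1` fixed vertices. -/
def Xedges (n k ℓ : ℕ) : Finset (Finset (Fin n)) :=
  if Odd (n / (k - ℓ)) then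
    (Finset.powersetCard k (Finset.univ : Finset (Fin n))).filter fun e =>
      ∃ v ∈ e, (v : ℕ) < n / (2 * (k - ℓ))
  else
    (Finset.powersetCard k (Finset.univ : Finset (Fin n))).filter fun e =>
      (∃ v ∈ e, (v : ℕ) < n / (2 * (k - ℓ)) - 1) ∨
      ((∀ v ∈ e, n / (2 * (k - ℓ)) - 1 ≤ (v : ℕ)) ∧
        ∀ w : Fin n, n / (2 * (k - ℓ)) - 1 ≤ (w : ℕ) → (w : ℕ) < n / (2 * (k - ℓ)) + ℓ →
          w ∈ e)

/-- `e(B)`: the number of edges lying entirely inside `B`. -/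
def edgesIn {n : ℕ} (E : Finset (Finset (Fin n))) (B : Finset (Fin n)) : ℕ :=
  (E.filter fun e => e ⊆ B).card

/-- `(A, B)` is an `(ℓ,ξ)`-extremal partition of the vertex set:
`|A| = ⌈n/(2(k-ℓ))⌉ - 1`, `|B| = ⌊(2(k-ℓ)-1)n/(2(k-ℓ)) + 1⌋` and
`e(B) ≤ ξ · C(n,k)`. -/
def IsExtremalPartition (n k ℓ : ℕ) (E : Finset (Finset (Fin n))) (ξ : ℝ)
    (A B : Finset (Fin n)) : Prop :=
  Disjoint A B ∧ A ∪ B = Finset.univ ∧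
  A.card = ⌈(n : ℝ) / (2 * ((k - ℓ : ℕ) : ℝ))⌉₊ - 1 ∧
  B.card = ⌊(2 * ((k - ℓ : ℕ) : ℝ) - 1) * (n : ℝ) / (2 * ((k - ℓ : ℕ) : ℝ)) + 1⌋₊ ∧
  (edgesIn E B : ℝ) ≤ ξ * (n.choose k : ℝ)

/-- `H` is `(ℓ,ξ)`-extremal. -/
def IsExtremal (n k ℓ : ℕ) (E : Finset (Finset (Fin n))) (ξ : ℝ) : Prop :=
  ∃ A B, IsExtremalPartition n k ℓ E ξ A B

/-- `(A, B)` is a minimal `(ℓ,ξ)`-extremal partition: among all `(ℓ,ξ)`-extremal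
partitions it minimises `e(B)`. -/
def IsMinExtremalPartition (n k ℓ : ℕ) (E : Finset (Finset (Fin n))) (ξ : ℝ)
    (A B : Finset (Fin n)) : Prop :=
  IsExtremalPartition n k ℓ E ξ A B ∧
  ∀ A' B' : Finset (Fin n), IsExtremalPartition n k ℓ E ξ A' B' →
    edgesIn E B ≤ edgesIn E B'

open scoped Classical in
/-- `A_ε`: the set of vertices `v` with `d(v, B^(k-1)) ≥ (1-ε)·C(|B|, k-1)`. -/
noncomputable def Aeps (n k : ℕ) (E : Finset (Finset (Fin n))) (B : Finset (Fin n)) (ε : ℝ) :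
    Finset (Fin n) :=
  Finset.univ.filter fun v =>
    (1 - ε) * (B.card.choose (k - 1) : ℝ) ≤ (degIn E {v} B ∅ (k - 1) 0 : ℝ)

open scoped Classical in
/-- `B_ε`: the set of vertices `v` with `d(v, B^(k-1)) ≤ ε·C(|B|, k-1)`. -/
noncomputable def Beps (n k : ℕ) (E : Finset (Finset (Fin n))) (B : Finset (Fin n)) (ε : ℝ) :
    Finset (Fin n) :=
  Finset.univ.filter fun v =>
    (degIn E {v} B ∅ (k - 1) 0 : ℝ) ≤ ε * (B.card.choose (k - 1) : ℝ)

/-- `V_ε = V ∖ (A_ε ∪ B_ε)`. -/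
noncomputable def Veps (n k : ℕ) (E : Finset (Finset (Fin n))) (B : Finset (Fin n)) (ε : ℝ) :
    Finset (Fin n) :=
  Finset.univ \ (Aeps n k E B ε ∪ Beps n k E B ε)

/-- `L` is an ε-typical ℓ-set: `L ⊆ B_ε`, `|L| = ℓ` and
`d(L, B^(k-ℓ)) ≤ ε·C(|B|, k-ℓ)`. -/
def IsTypical (n k ℓ : ℕ) (E : Finset (Finset (Fin n))) (B : Finset (Fin n)) (ε : ℝ)
    (L : Finset (Fin n)) : Prop :=
  L.card = ℓ ∧ L ⊆ Beps n k E B ε ∧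
    (degIn E L B ∅ (k - ℓ) 0 : ℝ) ≤ ε * (B.card.choose (k - ℓ) : ℝ)

lemma my_mem_cycEdge {n k ℓ : ℕ} {f : ℕ → Fin n} {i : ℕ} {v : Fin n} :
    v ∈ cycEdge n k ℓ f i ↔ ∃ j < k, f ((i * (k - ℓ) + j) % n) = v := by
  simp [cycEdge]

lemma my_aux {k d i₁ j₁ j₂ c : ℕ} (hk2 : k < 2 * d) (hj₁ : j₁ < k) (hc : 1 ≤ c)
    (he : i₁ * d + j₁ = (i₁ + c) * d + j₂) : c = 1 ∧ j₁ = j₂ + d := by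
  have h : j₁ = c * d + j₂ := by
    have h2 : i₁ * d + j₁ = i₁ * d + (c * d + j₂) := by rw [he]; ring
    exact Nat.add_left_cancel h2
  rcases eq_or_lt_of_le hc with h1 | h1
  · exact ⟨h1.symm, by rw [h, ← h1]; ring⟩
  · exfalso
    have h2 : 2 * d ≤ c * d := Nat.mul_le_mul_right _ h1
    have h3 : c * d ≤ j₁ := h ▸ Nat.le_add_right _ _
    omega

lemma my_key {n k ℓ m : ℕ} {f : ℕ → Fin n} (hf : Set.InjOn f (Set.Iio n))
    (hlk : ℓ < k) (hk2 : k < 2 * (k - ℓ)) (hn : n = m * (k - ℓ)) (hkn : k ≤ n)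
    {i₁ i₂ j₁ j₂ : ℕ} (hi₁ : i₁ < m) (hi₂ : i₂ < m) (hj₁ : j₁ < k) (hj₂ : j₂ < k)
    (hne : i₁ ≠ i₂)
    (heq : f ((i₁ * (k - ℓ) + j₁) % n) = f ((i₂ * (k - ℓ) + j₂) % n)) :
    (i₂ = (i₁ + 1) % m ∧ j₁ = j₂ + (k - ℓ)) ∨ (i₁ = (i₂ + 1) % m ∧ j₂ = j₁ + (k - ℓ)) := by
  set d := k - ℓ with hdd
  have hd0 : 0 < d := by omega
  have hn0 : 0 < n := by omega
  have ha : (i₁ * d + j₁) % n = (i₂ * d + j₂) % n :=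
    hf (Set.mem_Iio.mpr (Nat.mod_lt _ hn0)) (Set.mem_Iio.mpr (Nat.mod_lt _ hn0)) heq
  have hb₁ : i₁ * d + j₁ < 2 * n := by
    have : i₁ * d ≤ (m - 1) * d := Nat.mul_le_mul_right _ (by omega)
    have h2 : (m - 1) * d = n - d := by rw [hn]; rw [Nat.sub_mul]; simp
    omega
  have hb₂ : i₂ * d + j₂ < 2 * n := by
    have : i₂ * d ≤ (m - 1) * d := Nat.mul_le_mul_right _ (by omega)
    have h2 : (m - 1) * d = n - d := by rw [hn]; rw [Nat.sub_mul]; simp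
    omega
  have hm1 : ∀ a : ℕ, a < 2 * n → a % n = a ∨ a % n + n = a := by
    intro a hlt
    rcases lt_or_ge a n with h | h
    · exact Or.inl (Nat.mod_eq_of_lt h)
    · right
      rw [Nat.mod_eq_sub_mod h, Nat.mod_eq_of_lt (by omega)]
      omega
  have htri : i₁ * d + j₁ = i₂ * d + j₂ ∨ i₁ * d + j₁ = i₂ * d + j₂ + n ∨
      i₂ * d + j₂ = i₁ * d + j₁ + n := by
    rcases hm1 _ hb₁ with h1 | h1 <;> rcases hm1 _ hb₂ with h2 | h2 <;> omega
  have hmm : m * d = n := hn.symm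
  rcases htri with h | h | h
  · rcases Nat.lt_or_ge i₁ i₂ with hlt | hge
    · left
      have he : i₁ * d + j₁ = (i₁ + (i₂ - i₁)) * d + j₂ := by
        rw [show i₁ + (i₂ - i₁) = i₂ by omega]; exact h
      obtain ⟨hc1, hj⟩ := my_aux hk2 hj₁ (by omega) he
      refine ⟨?_, hj⟩
      rw [show i₁ + 1 = i₂ from by omega]
      exact (Nat.mod_eq_of_lt hi₂).symm
    · right
      have hlt2 : i₂ < i₁ := by omega
      have he : i₂ * d + j₂ = (i₂ + (i₁ - i₂)) * d + j₁ := by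
        rw [show i₂ + (i₁ - i₂) = i₁ by omega]; exact h.symm
      obtain ⟨hc1, hj⟩ := my_aux hk2 hj₂ (by omega) he
      refine ⟨?_, hj⟩
      rw [show i₂ + 1 = i₁ by omega, Nat.mod_eq_of_lt hi₁]
  · -- i₁ * d + j₁ = i₂ * d + j₂ + n  (so i₁ = m-1, i₂ = 0)
    left
    have he : i₁ * d + j₁ = (i₁ + (i₂ + m - i₁)) * d + j₂ := by
      rw [show i₁ + (i₂ + m - i₁) = i₂ + m by omega, add_mul, hmm]; omega
    obtain ⟨hc1, hj⟩ := my_aux hk2 hj₁ (by omega) he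
    have : i₂ + m = i₁ + 1 := by omega
    refine ⟨?_, hj⟩
    have hi1 : i₁ = m - 1 := by omega
    have hi2 : i₂ = 0 := by omega
    rw [hi1, hi2, show m - 1 + 1 = m by omega, Nat.mod_self]
  · right
    have he : i₂ * d + j₂ = (i₂ + (i₁ + m - i₂)) * d + j₁ := by
      rw [show i₂ + (i₁ + m - i₂) = i₁ + m by omega, add_mul, hmm]; omega
    obtain ⟨hc1, hj⟩ := my_aux hk2 hj₂ (by omega) he
    refine ⟨?_, hj⟩
    have hi1 : i₂ = m - 1 := by omega
    have hi2 : i₁ = 0 := by omega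
    rw [hi1, hi2, show m - 1 + 1 = m by omega, Nat.mod_self]

open scoped Classical in
lemma my_two {n k ℓ m : ℕ} {f : ℕ → Fin n} (hf : Set.InjOn f (Set.Iio n))
    (hlk : ℓ < k) (hk2 : k < 2 * (k - ℓ)) (hn : n = m * (k - ℓ)) (hkn : k ≤ n) (v : Fin n) :
    (((Finset.range m)).filter fun i => v ∈ cycEdge n k ℓ f i).card ≤ 2 := by
  by_contra hcon
  rw [not_le] at hcon
  obtain ⟨a, b, c, ha, hb, hc, hab, hac, hbc⟩ := Finset.two_lt_card_iff.mp hcon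
  rw [Finset.mem_filter, Finset.mem_range] at ha hb hc
  obtain ⟨ja, hja, hfa⟩ := my_mem_cycEdge.mp ha.2
  obtain ⟨jb, hjb, hfb⟩ := my_mem_cycEdge.mp hb.2
  obtain ⟨jc, hjc, hfc⟩ := my_mem_cycEdge.mp hc.2
  have h1 := my_key hf hlk hk2 hn hkn ha.1 hb.1 hja hjb hab (hfa.trans hfb.symm)
  have h2 := my_key hf hlk hk2 hn hkn ha.1 hc.1 hja hjc hac (hfa.trans hfc.symm)
  have h3 := my_key hf hlk hk2 hn hkn hb.1 hc.1 hjb hjc hbc (hfb.trans hfc.symm)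
  have hd0 : 0 < k - ℓ := by omega
  rcases h1 with ⟨_, h1⟩ | ⟨_, h1⟩ <;> rcases h2 with ⟨_, h2⟩ | ⟨_, h2⟩ <;>
    rcases h3 with ⟨_, h3⟩ | ⟨_, h3⟩ <;> omega

open scoped Classical in
lemma my_count {n k ℓ m : ℕ} {f : ℕ → Fin n} (hf : Set.InjOn f (Set.Iio n))
    (hlk : ℓ < k) (hk2 : k < 2 * (k - ℓ)) (hn : n = m * (k - ℓ)) (hkn : k ≤ n)
    (A : Finset (Fin n)) :
    (((Finset.range m)).filter fun i => ∃ v ∈ A, v ∈ cycEdge n k ℓ f i).card ≤ 2 * A.card := by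
  calc (((Finset.range m)).filter fun i => ∃ v ∈ A, v ∈ cycEdge n k ℓ f i).card
      ≤ (A.biUnion fun v => (Finset.range m).filter fun i => v ∈ cycEdge n k ℓ f i).card := by
        apply Finset.card_le_card
        intro i hi
        rw [Finset.mem_filter] at hi
        obtain ⟨hi1, v, hv, hve⟩ := hi
        exact Finset.mem_biUnion.mpr ⟨v, hv, Finset.mem_filter.mpr ⟨hi1, hve⟩⟩
    _ ≤ ∑ v ∈ A, (((Finset.range m)).filter fun i => v ∈ cycEdge n k ℓ f i).card :=
        Finset.card_biUnion_le
    _ ≤ ∑ _v ∈ A, 2 := Finset.sum_le_sum fun v _ => my_two hf hlk hk2 hn hkn v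
    _ = 2 * A.card := by rw [Finset.sum_const, smul_eq_mul, mul_comm]

lemma my_card_lt (n c : ℕ) (h : c ≤ n) :
    ((Finset.univ : Finset (Fin n)).filter fun v : Fin n => (v : ℕ) < c).card = c := by
  have h2 : ∀ x ∈ Finset.range c, x < n := fun x hx => lt_of_lt_of_le (Finset.mem_range.mp hx) h
  rw [show ((Finset.univ : Finset (Fin n)).filter fun v : Fin n => (v : ℕ) < c)
      = (Finset.range c).attachFin h2 by ext v; simp [Finset.mem_attachFin]]
  rw [Finset.card_attachFin, Finset.card_range]

lemma my_card_Ico (n a b : ℕ) (h : b ≤ n) :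
    ((Finset.univ : Finset (Fin n)).filter fun v : Fin n => a ≤ (v : ℕ) ∧ (v : ℕ) < b).card = b - a := by
  have h2 : ∀ x ∈ Finset.Ico a b, x < n := fun x hx => lt_of_lt_of_le (Finset.mem_Ico.mp hx).2 h
  rw [show ((Finset.univ : Finset (Fin n)).filter fun v : Fin n => a ≤ (v : ℕ) ∧ (v : ℕ) < b)
      = (Finset.Ico a b).attachFin h2 by ext v; simp [Finset.mem_attachFin]]
  rw [Finset.card_attachFin, Nat.card_Ico]

/-- For all integers `k ≥ 3` and `1 ≤ ℓ < k/2` and all `n` divisible by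
`k-ℓ`, the extremal hypergraph `X_{k,ℓ}(n)` contains no Hamiltonian ℓ-cycle. -/
theorem statement13 (k ℓ n : ℕ) (hk : 3 ≤ k) (hl : 1 ≤ ℓ) (hlk : 2 * ℓ < k)
    (hdvd : (k - ℓ) ∣ n) :
    ¬ HasHamCycle n k ℓ (Xedges n k ℓ) := by
  classical
  rintro ⟨f, hinj, hE, hI⟩
  rcases Nat.eq_zero_or_pos n with h0 | hn0
  · subst h0; exact (f 0).elim0
  have hd0 : 0 < k - ℓ := by omega
  obtain ⟨m, hnm'⟩ := hdvd
  have hnm : n = m * (k - ℓ) := by rw [hnm', mul_comm]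
  have hmeq : n / (k - ℓ) = m := by rw [hnm]; exact Nat.mul_div_cancel m hd0
  simp only [hmeq] at hE hI
  have hm0 : 0 < m := by
    rcases Nat.eq_zero_or_pos m with h | h
    · subst h; simp at hnm; omega
    · exact h
  have hE0 := hE 0 hm0
  have hcard : (cycEdge n k ℓ f 0).card = k := by
    unfold Xedges at hE0
    split at hE0 <;> rw [Finset.mem_filter, Finset.mem_powersetCard] at hE0 <;> exact hE0.1.2
  have hkn : k ≤ n := by
    rw [← hcard]
    exact le_trans (Finset.card_le_univ _) (by simp)
  have hk2 : k < 2 * (k - ℓ) := by omega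
  have hdiv : n / (2 * (k - ℓ)) = m / 2 := by
    rw [hnm, Nat.mul_div_mul_right m 2 hd0]
  have hmn : m ≤ n := by
    have := Nat.le_mul_of_pos_right m hd0
    omega
  by_cases hodd : Odd m
  · -- odd case
    set A := (Finset.univ : Finset (Fin n)).filter (fun v : Fin n => (v : ℕ) < m / 2) with hA
    have hAc : A.card = m / 2 := my_card_lt n (m / 2) (by omega)
    have hsub : Finset.range m ⊆ (Finset.range m).filter
        fun i => ∃ v ∈ A, v ∈ cycEdge n k ℓ f i := by
      intro i hi
      have hEi := hE i (Finset.mem_range.mp hi)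
      unfold Xedges at hEi
      rw [if_pos (by rwa [hmeq])] at hEi
      rw [Finset.mem_filter] at hEi
      obtain ⟨v, hv, hvlt⟩ := hEi.2
      refine Finset.mem_filter.mpr ⟨hi, v, ?_, hv⟩
      exact Finset.mem_filter.mpr ⟨Finset.mem_univ _, by rwa [hdiv] at hvlt⟩
    have hle := Finset.card_le_card hsub
    rw [Finset.card_range] at hle
    have hcnt := my_count hinj (by omega) hk2 hnm hkn A
    rw [hAc] at hcnt
    obtain ⟨t, ht⟩ := hodd
    omega
  · -- even case
    set A := (Finset.univ : Finset (Fin n)).filter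
      (fun v : Fin n => (v : ℕ) < m / 2 - 1) with hA
    have hAc : A.card = m / 2 - 1 := my_card_lt n (m / 2 - 1) (by omega)
    have hcnt := my_count hinj (by omega) hk2 hnm hkn A
    rw [hAc] at hcnt
    have hsplit := Finset.card_filter_add_card_filter_not
      (s := Finset.range m) (p := fun i => ∃ v ∈ A, v ∈ cycEdge n k ℓ f i)
    rw [Finset.card_range] at hsplit
    have hmeven : m % 2 = 0 := Nat.even_iff.mp (Nat.not_odd_iff_even.mp hodd)
    have h2le : 1 < ((Finset.range m).filter
        fun i => ¬ ∃ v ∈ A, v ∈ cycEdge n k ℓ f i).card := by omega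
    obtain ⟨i₁, hi₁, i₂, hi₂, hne⟩ := Finset.one_lt_card.mp h2le
    have hbn : m / 2 + ℓ < n := by
      have e1 : m / 2 ≤ m / 2 * (k - ℓ) := Nat.le_mul_of_pos_right _ hd0
      have e2 : (m / 2 + 1) * (k - ℓ) ≤ m * (k - ℓ) := Nat.mul_le_mul_right _ (by omega)
      have e3 : (m / 2 + 1) * (k - ℓ) = m / 2 * (k - ℓ) + (k - ℓ) := by ring
      omega
    have hFsub : ∀ i ∈ (Finset.range m).filter
        (fun i => ¬ ∃ v ∈ A, v ∈ cycEdge n k ℓ f i),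
        ∀ w : Fin n, m / 2 - 1 ≤ (w : ℕ) → (w : ℕ) < m / 2 + ℓ →
          w ∈ cycEdge n k ℓ f i := by
      intro i hi w hw1 hw2
      rw [Finset.mem_filter] at hi
      have hEi := hE i (Finset.mem_range.mp hi.1)
      unfold Xedges at hEi
      rw [if_neg (by rwa [hmeq])] at hEi
      rw [Finset.mem_filter] at hEi
      rcases hEi.2 with ⟨v, hv, hvlt⟩ | ⟨-, hall⟩
      · exact absurd ⟨v, Finset.mem_filter.mpr ⟨Finset.mem_univ _,
          by rwa [hdiv] at hvlt⟩, hv⟩ hi.2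
      · exact hall w (by rwa [hdiv]) (by rwa [hdiv])
    set w₀ : Fin n := ⟨m / 2 - 1, by omega⟩ with hw₀
    have hw₀v : (w₀ : ℕ) = m / 2 - 1 := rfl
    have hwe₁ : w₀ ∈ cycEdge n k ℓ f i₁ :=
      hFsub i₁ hi₁ w₀ (by rw [hw₀v]) (by rw [hw₀v]; omega)
    have hwe₂ : w₀ ∈ cycEdge n k ℓ f i₂ :=
      hFsub i₂ hi₂ w₀ (by rw [hw₀v]) (by rw [hw₀v]; omega)
    obtain ⟨j₁, hj₁, hf₁⟩ := my_mem_cycEdge.mp hwe₁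
    obtain ⟨j₂, hj₂, hf₂⟩ := my_mem_cycEdge.mp hwe₂
    have hi₁m : i₁ < m := Finset.mem_range.mp (Finset.mem_filter.mp hi₁).1
    have hi₂m : i₂ < m := Finset.mem_range.mp (Finset.mem_filter.mp hi₂).1
    have hkey := my_key hinj (by omega) hk2 hnm hkn hi₁m hi₂m hj₁ hj₂ hne
      (hf₁.trans hf₂.symm)
    set F := (Finset.univ : Finset (Fin n)).filter
      (fun v : Fin n => m / 2 - 1 ≤ (v : ℕ) ∧ (v : ℕ) < m / 2 + ℓ) with hF
    have hFc : F.card = ℓ + 1 := by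
      rw [hF, my_card_Ico n _ _ (by omega)]; omega
    have hFsub2 : ∀ i ∈ (Finset.range m).filter
        (fun i => ¬ ∃ v ∈ A, v ∈ cycEdge n k ℓ f i), F ⊆ cycEdge n k ℓ f i := by
      intro i hi w hw
      rw [hF, Finset.mem_filter] at hw
      exact hFsub i hi w hw.2.1 hw.2.2
    rcases hkey with ⟨hcons, -⟩ | ⟨hcons, -⟩
    · have hIc := hI i₁ hi₁m
      rw [← hcons] at hIc
      have hle : F.card ≤ ℓ := by
        rw [← hIc]
        exact Finset.card_le_card
          (Finset.subset_inter (hFsub2 i₁ hi₁) (hFsub2 i₂ hi₂))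
      omega
    · have hIc := hI i₂ hi₂m
      rw [← hcons] at hIc
      have hle : F.card ≤ ℓ := by
        rw [← hIc]
        exact Finset.card_le_card
          (Finset.subset_inter (hFsub2 i₂ hi₂) (hFsub2 i₁ hi₁))
      omega
end

section
/- For all integers k ≥ 3 and 1 ≤ ℓ < k/2 and all n divisible by k−ℓ, with a = ⌈n/(2(k−ℓ))⌉ − 1 and b = n − a, the minimum (k−2)-degree of X_{k,ℓ}(n) satisfies δ_{k−2}(X_{k,ℓ}(n)) ≥ C(a,2) + a(b−k+2); consequently, every k-uniform hypergraph H on n vertices with δ_{k−2}(H) > δ_{k−2}(X_{k,ℓ}(n)) satisfies δ_{k−2}(H) > C(a,2) + a(b−k+2). -/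
open Finset

lemma choose_two_add' (x y : ℕ) : (x + y).choose 2 = x.choose 2 + x * y + y.choose 2 := by
  induction y with
  | zero => simp
  | succ y ih =>
    have h1 : x + (y+1) = (x + y) + 1 := by ring
    have h2 : ∀ n : ℕ, (n+1).choose 2 = n.choose 2 + n := by
      intro n; rw [Nat.choose_succ_succ]; simp [Nat.choose_one_right]; ring
    rw [h1, h2, ih, h2]; ring

lemma ceil_half' (q : ℕ) : ⌈(q:ℝ)/2⌉₊ = (q+1)/2 := by
  rcases Nat.even_or_odd q with ⟨t, ht⟩ | ⟨t, ht⟩ <;> subst ht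
  · have h : ((t+t:ℕ):ℝ)/2 = (t:ℝ) := by push_cast; ring
    rw [h, Nat.ceil_natCast]; omega
  · have h : ((2*t+1:ℕ):ℝ)/2 = (t:ℝ) + 1/2 := by push_cast; ring
    rw [h]
    have : ⌈(t:ℝ) + 1/2⌉₊ = t + 1 := by
      rw [Nat.ceil_eq_iff (by omega)]
      constructor <;> push_cast <;> norm_num
    rw [this]; omega

lemma card_fin_lt' (n a : ℕ) (h : a ≤ n) :
    (univ.filter fun v : Fin n => (v:ℕ) < a).card = a := by
  have he : (univ.filter fun v : Fin n => (v:ℕ) < a)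
      = (Finset.range a).attachFin (fun m hm => lt_of_lt_of_le (Finset.mem_range.mp hm) h) := by
    ext v; simp [Finset.mem_attachFin]
  rw [he, Finset.card_attachFin, Finset.card_range]

/-- For all integers `k ≥ 3` and `1 ≤ ℓ < k/2` and all `n` divisible by
`k-ℓ`, with `a = ⌈n/(2(k-ℓ))⌉ - 1` and `b = n - a`, we have
`δ_{k-2}(X_{k,ℓ}(n)) ≥ C(a,2) + a(b-k+2)`; consequently every `k`-uniform hypergraph
`H` on `n` vertices with `δ_{k-2}(H) > δ_{k-2}(X_{k,ℓ}(n))` satisfies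
`δ_{k-2}(H) > C(a,2) + a(b-k+2)`. -/
theorem statement18 (k ℓ n : ℕ) (hk : 3 ≤ k) (hl : 1 ≤ ℓ) (hlk : 2 * ℓ < k)
    (hdvd : (k - ℓ) ∣ n) (a b : ℕ)
    (ha : a = ⌈(n : ℝ) / (2 * ((k - ℓ : ℕ) : ℝ))⌉₊ - 1) (hb : b = n - a) :
    a.choose 2 + a * (b - k + 2) ≤ minDeg n (Xedges n k ℓ) (k - 2) ∧
    ∀ E : Finset (Finset (Fin n)), Uniform n k E →
      minDeg n (Xedges n k ℓ) (k - 2) < minDeg n E (k - 2) →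
      a.choose 2 + a * (b - k + 2) < minDeg n E (k - 2) := by
  suffices h : a.choose 2 + a * (b - k + 2) ≤ minDeg n (Xedges n k ℓ) (k - 2) by
    exact ⟨h, fun E _ hE => lt_of_le_of_lt h hE⟩
  rcases Nat.eq_zero_or_pos a with ha0 | hapos
  · rw [ha0]; simp
  obtain ⟨q, hq⟩ := hdvd
  have hmpos : 0 < k - ℓ := by omega
  have hmR : ((k - ℓ : ℕ) : ℝ) ≠ 0 := by positivity
  -- a = (q+1)/2 - 1
  have haq : a = (q + 1) / 2 - 1 := by
    have hdiv : (n : ℝ) / (2 * ((k - ℓ : ℕ) : ℝ)) = (q : ℝ) / 2 := by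
      rw [hq]; push_cast; field_simp
    rw [ha, hdiv, ceil_half']
  have hq3 : 3 ≤ q := by omega
  -- linear facts for omega
  have f1 : n = (k - ℓ) * 2 + (k - ℓ) * (q - 2) := by
    rw [hq, ← Nat.mul_add]; congr 1; omega
  have f2 : q - 2 ≤ (k - ℓ) * (q - 2) := Nat.le_mul_of_pos_left _ hmpos
  have hc : n / (2 * (k - ℓ)) = q / 2 := by
    rw [hq, mul_comm 2 (k - ℓ), Nat.mul_div_mul_left _ _ hmpos]
  have hqq : n / (k - ℓ) = q := by rw [hq, Nat.mul_div_cancel_left _ hmpos]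
  have hkn : k + a ≤ n := by omega
  -- membership lemma
  have hedge : ∀ e : Finset (Fin n), e.card = k → (∃ v ∈ e, (v:ℕ) < a) →
      e ∈ Xedges n k ℓ := by
    rintro e hcard ⟨v, hv, hva⟩
    unfold Xedges
    split_ifs with hodd
    · rw [hqq, Nat.odd_iff] at hodd
      simp only [mem_filter, Finset.mem_powersetCard]
      exact ⟨⟨subset_univ _, hcard⟩, v, hv, by omega⟩
    · rw [hqq, Nat.odd_iff] at hodd
      simp only [mem_filter, Finset.mem_powersetCard]
      exact ⟨⟨subset_univ _, hcard⟩, Or.inl ⟨v, hv, by omega⟩⟩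
  -- degree lower bound for each S
  have hdegS : ∀ S : Finset (Fin n), S.card = k - 2 →
      a.choose 2 + a * (b - k + 2) ≤ deg (Xedges n k ℓ) S := by
    intro S hS
    have hUcard : (univ \ S).card = n - (k - 2) := by
      rw [Finset.card_sdiff_of_subset (subset_univ _), Finset.card_univ, Fintype.card_fin, hS]
    have hkey : ∀ P : Finset (Finset (Fin n)),
        (∀ p ∈ P, p ⊆ univ \ S ∧ p.card = 2 ∧ ∃ v ∈ S ∪ p, (v:ℕ) < a) →
        P.card ≤ deg (Xedges n k ℓ) S := by
      intro P hP
      unfold deg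
      apply Finset.card_le_card_of_injOn (fun p => S ∪ p)
      · intro p hp
        obtain ⟨hpU, hp2, v, hv, hva⟩ := hP p hp
        have hdisj : Disjoint S p := by
          rw [Finset.disjoint_left]
          intro x hx hxp
          exact (Finset.mem_sdiff.mp (hpU hxp)).2 hx
        have hcard : (S ∪ p).card = k := by
          rw [Finset.card_union_of_disjoint hdisj, hS, hp2]; omega
        exact Finset.mem_filter.mpr ⟨hedge _ hcard ⟨v, hv, hva⟩, Finset.subset_union_left⟩
      · intro p hp p' hp' heq
        have hd1 : Disjoint S p := by
          rw [Finset.disjoint_left]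
          intro x hx hxp
          exact (Finset.mem_sdiff.mp ((hP p hp).1 hxp)).2 hx
        have hd2 : Disjoint S p' := by
          rw [Finset.disjoint_left]
          intro x hx hxp
          exact (Finset.mem_sdiff.mp ((hP p' hp').1 hxp)).2 hx
        have heq' : S ∪ p = S ∪ p' := heq
        calc p = (S ∪ p) \ S := (Finset.union_sdiff_cancel_left hd1).symm
          _ = (S ∪ p') \ S := by rw [heq']
          _ = p' := Finset.union_sdiff_cancel_left hd2
    by_cases hSA : ∃ v ∈ S, (v:ℕ) < a
    · -- S meets A: use all pairs
      obtain ⟨w, hw, hwa⟩ := hSA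
      have h1 : ((univ \ S).powersetCard 2).card ≤ deg (Xedges n k ℓ) S := by
        apply hkey
        intro p hp
        rw [Finset.mem_powersetCard] at hp
        exact ⟨hp.1, hp.2, w, Finset.mem_union_left _ hw, hwa⟩
      refine le_trans ?_ h1
      rw [Finset.card_powersetCard, hUcard,
        show n - (k - 2) = a + (n - (k - 2) - a) from by omega, choose_two_add']
      have : a * (b - k + 2) ≤ a * (n - (k - 2) - a) :=
        Nat.mul_le_mul_left _ (by omega)
      omega
    · push_neg at hSA
      set Q := ((univ \ S).powersetCard 2).filter (fun p => ∃ v : Fin n, v ∈ p ∧ (v:ℕ) < a) with hQ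
      have h1 : Q.card ≤ deg (Xedges n k ℓ) S := by
        apply hkey
        intro p hp
        rw [hQ, Finset.mem_filter, Finset.mem_powersetCard] at hp
        obtain ⟨⟨hpU, hp2⟩, v, hv, hva⟩ := hp
        exact ⟨hpU, hp2, v, Finset.mem_union_right _ hv, hva⟩
      refine le_trans ?_ h1
      -- count Q
      have hAU : (univ \ S).filter (fun v : Fin n => (v:ℕ) < a) = univ.filter (fun v : Fin n => (v:ℕ) < a) := by
        ext v
        simp only [Finset.mem_filter, Finset.mem_sdiff, Finset.mem_univ, true_and]
        constructor
        · rintro ⟨_, h⟩; exact h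
        · intro h; exact ⟨fun hvS => absurd h (by simpa using hSA v hvS), h⟩
      have hAcard : ((univ \ S).filter (fun v : Fin n => (v:ℕ) < a)).card = a := by
        rw [hAU, card_fin_lt' n a (by omega)]
      have hBcard : ((univ \ S).filter (fun v : Fin n => ¬ (v:ℕ) < a)).card = n - (k - 2) - a := by
        have := Finset.card_filter_add_card_filter_not
          (s := univ \ S) (p := fun v => (v:ℕ) < a)
        omega
      have hcompl : ((univ \ S).powersetCard 2).filter (fun p => ¬ ∃ v : Fin n, v ∈ p ∧ (v:ℕ) < a)
          = ((univ \ S).filter (fun v : Fin n => ¬ (v:ℕ) < a)).powersetCard 2 := by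
        ext p
        simp only [Finset.mem_filter, Finset.mem_powersetCard]
        constructor
        · rintro ⟨⟨hpU, hp2⟩, hall⟩
          exact ⟨fun x hx => Finset.mem_filter.mpr ⟨hpU hx, fun hlt => hall ⟨x, hx, hlt⟩⟩, hp2⟩
        · rintro ⟨hpF, hp2⟩
          refine ⟨⟨fun x hx => (Finset.mem_filter.mp (hpF hx)).1, hp2⟩, ?_⟩
          rintro ⟨x, hx, hlt⟩
          exact (Finset.mem_filter.mp (hpF hx)).2 hlt
      have hsum : Q.card + (n - (k - 2) - a).choose 2 = (n - (k - 2)).choose 2 := by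
        have := Finset.card_filter_add_card_filter_not
          (s := (univ \ S).powersetCard 2) (p := fun p => ∃ v ∈ p, (v:ℕ) < a)
        rw [hcompl] at this
        rw [← hQ] at this
        rw [Finset.card_powersetCard, Finset.card_powersetCard, hBcard, hUcard] at this
        exact this
      have hsplit : (n - (k - 2)).choose 2
          = a.choose 2 + a * (n - (k - 2) - a) + (n - (k - 2) - a).choose 2 := by
        have h := choose_two_add' a (n - (k - 2) - a)
        rw [show a + (n - (k - 2) - a) = n - (k - 2) from by omega] at h
        rw [h]
      have hQcard : Q.card = a.choose 2 + a * (n - (k - 2) - a) :=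
        Nat.add_right_cancel (hsum.trans hsplit)
      rw [hQcard, show b - k + 2 = n - (k - 2) - a from by omega]
  -- conclude
  unfold minDeg
  apply le_csInf
  · obtain ⟨S, _, hS⟩ := Finset.exists_subset_card_eq
      (s := (univ : Finset (Fin n))) (n := k - 2)
      (by rw [Finset.card_univ, Fintype.card_fin]; omega)
    exact ⟨deg (Xedges n k ℓ) S, S, hS, rfl⟩
  · rintro d ⟨S, hS, rfl⟩
    exact hdegS S hS
end
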